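/- arXiv:1907.08351 — 2 statements merged into one kernel-verified Lean document; each statement's English description precedes it below -/
import Mathlib

section
/- Assume s is a potential satisfying (S1)–(S3) for which (*_0) holds, with gap pair v_0, w_0; set α_0 = v_0(0) and β_0 = w_0(0). Then for every δ ∈ (0, (β_0 − α_0)/2) there is ε_1 = ε_1(s, δ) > 0 such that for every potential s̄ satisfying (S1)–(S3) with ‖s − s̄‖_{L^∞} ≤ ε_1, one has v(0) ∉ (α_0 + δ, β_0 − δ) for all v ∈ M_0(s̄). In particular, there is ε > 0 such that (*_0) holds for every potential s̄ satisfying (S1)–(S3) with ‖s − s̄‖_{L^∞} ≤ ε. -/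
open scoped BigOperators

namespace FK

/-- The lattice `ℤ^n`. -/
abbrev Lat (n : ℕ) := Fin n → ℤ

/-- The `ℓ¹` norm on `ℤ^n`. -/
def latNorm {n : ℕ} (i : Lat n) : ℕ := ∑ k, (i k).natAbs

/-- The ball `B_0^r = {k ∈ ℤ^n : ‖k‖ ≤ r}`. -/
abbrev B0 (n r : ℕ) := {k : Lat n // latNorm k ≤ r}

lemma B0.coord_mem {n r : ℕ} (k : B0 n r) (i : Fin n) :
    k.1 i ∈ Finset.Icc (-(r : ℤ)) (r : ℤ) := by
  have h1 : (k.1 i).natAbs ≤ latNorm k.1 :=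
    Finset.single_le_sum (f := fun j => (k.1 j).natAbs) (fun _ _ => Nat.zero_le _)
      (Finset.mem_univ i)
  have h2 := k.2
  simp only [Finset.mem_Icc]
  omega

noncomputable instance B0.instFintype (n r : ℕ) : Fintype (B0 n r) :=
  Fintype.ofInjective
    (fun k : B0 n r => (fun i => (⟨k.1 i, B0.coord_mem k i⟩ : (Finset.Icc (-(r : ℤ)) (r : ℤ)))))
    (fun a b h => Subtype.ext (funext fun i => congrArg Subtype.val (congrFun h i)))

/-- The center of the ball `B_0^r`. -/
def B0.zero (n r : ℕ) : B0 n r := ⟨0, by simp [latNorm]⟩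

/-- The local potential `S_j(u) = s((i ↦ u(j+i))|_{B_0^r})`. -/
noncomputable def Spot {n r : ℕ} (s : (B0 n r → ℝ) → ℝ) (j : Lat n) (u : Lat n → ℝ) : ℝ :=
  s fun k => u (j + k.1)

/-- The partial derivative of `s : ℝ^{B_0^r} → ℝ` with respect to the coordinate `k`. -/
noncomputable def pder {n r : ℕ} (s : (B0 n r → ℝ) → ℝ) (k : B0 n r) (x : B0 n r → ℝ) : ℝ :=
  deriv (fun t => s (Function.update x k t)) (x k)

/-- The partial derivative `∂_i S_j(u)` of `S_j` with respect to the variable `u(i)`. -/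
noncomputable def pderS {n r : ℕ} (s : (B0 n r → ℝ) → ℝ) (i j : Lat n) (u : Lat n → ℝ) : ℝ :=
  deriv (fun t => Spot s j (Function.update u i t)) (u i)

/-- Conditions (S1)–(S3) on the potential, together with `C²` smoothness. -/
structure IsPotential (n r : ℕ) (s : (B0 n r → ℝ) → ℝ) : Prop where
  smooth : ContDiff ℝ 2 s
  periodic : ∀ x : B0 n r → ℝ, s (fun k => x k + 1) = s x
  bddBelow : ∃ M : ℝ, ∀ x, M ≤ s x
  coercive : ∀ k j : B0 n r, latNorm (k.1 - j.1) = 1 →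
    ∀ C : ℝ, ∃ R : ℝ, ∀ x : B0 n r → ℝ, R ≤ |x k - x j| → C ≤ s x
  cross_nonpos : ∀ k j : B0 n r, k ≠ j → ∀ x, pder (pder s j) k x ≤ 0
  cross_neg : ∀ j : B0 n r, latNorm j.1 = 1 → ∀ x, pder (pder s j) (B0.zero n r) x < 0

/-- `u` satisfies the Euler–Lagrange equation (EL) at the site `i`. -/
def SolvesAt {n r : ℕ} (s : (B0 n r → ℝ) → ℝ) (u : Lat n → ℝ) (i : Lat n) : Prop :=
  ∑ k : B0 n r, pderS s i (i + k.1) u = 0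

/-- `u` is a solution of the Euler–Lagrange equation (EL). -/
def IsSolution {n r : ℕ} (s : (B0 n r → ℝ) → ℝ) (u : Lat n → ℝ) : Prop :=
  ∀ i : Lat n, SolvesAt s u i

/-- The `m`-th standard basis vector of `ℤ^n` (`0`-indexed: `latE 0 = e_1`). -/
def latE {n : ℕ} (m : ℕ) : Lat n := fun k => if (k : ℕ) = m then 1 else 0

/-- The lattice point `T_i = (i,0,…,0)`. -/
def latT {n : ℕ} (i : ℤ) : Lat n := fun k => if (k : ℕ) = 0 then i else 0

/-- The first coordinate index of `Fin (n+2)`. -/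
def coord0 (n : ℕ) : Fin (n + 2) := ⟨0, by omega⟩

/-- The second coordinate index of `Fin (n+2)`. -/
def coord1 (n : ℕ) : Fin (n + 2) := ⟨1, by omega⟩

/-- Configurations of period one in every coordinate direction (the set `Γ_0`). -/
def fullyPeriodic {n : ℕ} (u : Lat n → ℝ) : Prop :=
  ∀ i : Lat n, ∀ k : Fin n, u (i + latE (k : ℕ)) = u i

noncomputable def J0 {n r : ℕ} (s : (B0 n r → ℝ) → ℝ) (u : Lat n → ℝ) : ℝ := Spot s 0 u

noncomputable def c0 {n r : ℕ} (s : (B0 n r → ℝ) → ℝ) : ℝ :=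
  sInf (J0 s '' {u | fullyPeriodic u})

def M0 {n r : ℕ} (s : (B0 n r → ℝ) → ℝ) : Set (Lat n → ℝ) :=
  {u | fullyPeriodic u ∧ J0 s u = c0 s}

/-- `v`, `w` form an adjacent (gap) pair of the set `A`:  `v < w` pointwise, both belong to
`A`, and no element of `A` lies strictly between them. -/
def Adjacent {n : ℕ} (A : Set (Lat n → ℝ)) (v w : Lat n → ℝ) : Prop :=
  v ∈ A ∧ w ∈ A ∧ (∀ i, v i < w i) ∧ ∀ u ∈ A, v ≤ u → u ≤ w → u = v ∨ u = w

/-- Configurations of period one in the coordinate directions `2,…,n`. -/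
def tailPeriodic {n : ℕ} (u : Lat n → ℝ) : Prop :=
  ∀ i : Lat n, ∀ k : Fin n, (k : ℕ) ≠ 0 → u (i + latE (k : ℕ)) = u i

/-- The set `Γ̂_1(v,w)`. -/
def Gamma1hat {n : ℕ} (v w : Lat n → ℝ) : Set (Lat n → ℝ) :=
  {u | tailPeriodic u ∧ v ≤ u ∧ u ≤ w}

noncomputable def J1i {n r : ℕ} (s : (B0 n r → ℝ) → ℝ) (i : ℤ) (u : Lat n → ℝ) : ℝ :=
  Spot s (latT i) u - c0 s

noncomputable def J1pq {n r : ℕ} (s : (B0 n r → ℝ) → ℝ) (p q : ℤ) (u : Lat n → ℝ) : ℝ :=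
  ∑ i ∈ Finset.Icc p q, J1i s i u

/-- The renormalized functional `J_1 = liminf_{p→-∞, q→∞} J_{1;p,q}`, as an extended real. -/
noncomputable def J1 {n r : ℕ} (s : (B0 n r → ℝ) → ℝ) (u : Lat n → ℝ) : EReal :=
  Filter.liminf (fun pq : ℤ × ℤ => ((J1pq s pq.1 pq.2 u : ℝ) : EReal))
    (Filter.atBot ×ˢ Filter.atTop)

/-- The filter `|i| → ∞` on `ℤ`. -/
noncomputable def absAtTop : Filter ℤ := Filter.comap (fun i : ℤ => |i|) Filter.atTop

/-- The set `Γ_1(v,w)` of configurations heteroclinic in `i_1` from `v` to `w`. -/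
def Gamma1 {n : ℕ} (v w : Lat n → ℝ) : Set (Lat n → ℝ) :=
  {u | u ∈ Gamma1hat v w ∧
    Filter.Tendsto (fun i : ℤ => |u (latT i) - v (latT i)|) Filter.atBot (nhds 0) ∧
    Filter.Tendsto (fun i : ℤ => |u (latT i) - w (latT i)|) Filter.atTop (nhds 0)}

noncomputable def c1 {n r : ℕ} (s : (B0 n r → ℝ) → ℝ) (v w : Lat n → ℝ) : EReal :=
  sInf (J1 s '' Gamma1 v w)

def M1 {n r : ℕ} (s : (B0 n r → ℝ) → ℝ) (v w : Lat n → ℝ) : Set (Lat n → ℝ) :=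
  {u ∈ Gamma1 v w | J1 s u = c1 s v w}

/-- The set `Γ_1(w,v)` of configurations heteroclinic in `i_1` from `w` down to `v`. -/
def Gamma1rev {n : ℕ} (v w : Lat n → ℝ) : Set (Lat n → ℝ) :=
  {u | u ∈ Gamma1hat v w ∧
    Filter.Tendsto (fun i : ℤ => |u (latT i) - w (latT i)|) Filter.atBot (nhds 0) ∧
    Filter.Tendsto (fun i : ℤ => |u (latT i) - v (latT i)|) Filter.atTop (nhds 0)}

noncomputable def c1rev {n r : ℕ} (s : (B0 n r → ℝ) → ℝ) (v w : Lat n → ℝ) : EReal :=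
  sInf (J1 s '' Gamma1rev v w)

def M1rev {n r : ℕ} (s : (B0 n r → ℝ) → ℝ) (v w : Lat n → ℝ) : Set (Lat n → ℝ) :=
  {u ∈ Gamma1rev v w | J1 s u = c1rev s v w}

/-- The set `Γ_1(v)`, for `v ∈ M_0`. -/
def Gamma1v {n : ℕ} (v : Lat n → ℝ) : Set (Lat n → ℝ) :=
  {u | u ∈ Gamma1hat (fun i => v i - 1) (fun i => v i + 1) ∧
    Filter.Tendsto (fun i : ℤ => |u (latT i) - v (latT i)|) absAtTop (nhds 0)}

noncomputable def c1v {n r : ℕ} (s : (B0 n r → ℝ) → ℝ) (v : Lat n → ℝ) : EReal :=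
  sInf (J1 s '' Gamma1v v)

def M1v {n r : ℕ} (s : (B0 n r → ℝ) → ℝ) (v : Lat n → ℝ) : Set (Lat n → ℝ) :=
  {u ∈ Gamma1v v | J1 s u = c1v s v}

/-! ### Periodic configurations with general periods (`Γ_0(l)` etc.) -/

def GammaPer {n : ℕ} (l : Fin n → ℕ) : Set (Lat n → ℝ) :=
  {u | ∀ i : Lat n, ∀ k : Fin n, u (i + (l k : ℤ) • latE (k : ℕ)) = u i}

noncomputable def J0l {n r : ℕ} (s : (B0 n r → ℝ) → ℝ) (l : Fin n → ℕ) (u : Lat n → ℝ) : ℝ :=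
  ∑ i ∈ Fintype.piFinset (fun k => Finset.Ico (0 : ℤ) (l k)), Spot s i u

noncomputable def c0l {n r : ℕ} (s : (B0 n r → ℝ) → ℝ) (l : Fin n → ℕ) : ℝ :=
  sInf (J0l s l '' GammaPer l)

def M0l {n r : ℕ} (s : (B0 n r → ℝ) → ℝ) (l : Fin n → ℕ) : Set (Lat n → ℝ) :=
  {u ∈ GammaPer l | J0l s l u = c0l s l}

/-! ### The `l`-periodic analogues of `Γ_1` (for Proposition 3.20) -/

/-- The finite slice `{j | j_1 = i, 0 ≤ j_k < l_k (k ≥ 2)}`. -/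
noncomputable def sliceBox {n : ℕ} (l : Fin n → ℕ) (i : ℤ) : Finset (Lat n) :=
  Fintype.piFinset fun k => if (k : ℕ) = 0 then {i} else Finset.Ico (0 : ℤ) (l k)

def tailPeriodicL {n : ℕ} (l : Fin n → ℕ) (u : Lat n → ℝ) : Prop :=
  ∀ i : Lat n, ∀ k : Fin n, (k : ℕ) ≠ 0 → u (i + (l k : ℤ) • latE (k : ℕ)) = u i

/-- `∏_{k=2}^{n} l_k`. -/
noncomputable def tailProd {n : ℕ} (l : Fin n → ℕ) : ℝ :=
  ∏ k ∈ Finset.univ.filter (fun k : Fin n => (k : ℕ) ≠ 0), (l k : ℝ)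

noncomputable def J1il {n r : ℕ} (s : (B0 n r → ℝ) → ℝ) (l : Fin n → ℕ) (i : ℤ)
    (u : Lat n → ℝ) : ℝ :=
  (∑ j ∈ sliceBox l i, Spot s j u) - tailProd l * c0 s

noncomputable def J1pql {n r : ℕ} (s : (B0 n r → ℝ) → ℝ) (l : Fin n → ℕ) (p q : ℤ)
    (u : Lat n → ℝ) : ℝ :=
  ∑ i ∈ Finset.Icc p q, J1il s l i u

noncomputable def J1l {n r : ℕ} (s : (B0 n r → ℝ) → ℝ) (l : Fin n → ℕ) (u : Lat n → ℝ) :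
    EReal :=
  Filter.liminf (fun pq : ℤ × ℤ => ((J1pql s l pq.1 pq.2 u : ℝ) : EReal))
    (Filter.atBot ×ˢ Filter.atTop)

def Gamma1hatL {n : ℕ} (l : Fin n → ℕ) (v w : Lat n → ℝ) : Set (Lat n → ℝ) :=
  {u | tailPeriodicL l u ∧ v ≤ u ∧ u ≤ w}

def Gamma1L {n : ℕ} (l : Fin n → ℕ) (v w : Lat n → ℝ) : Set (Lat n → ℝ) :=
  {u | u ∈ Gamma1hatL l v w ∧
    Filter.Tendsto (fun i : ℤ => ∑ j ∈ sliceBox l i, |u j - v j|) Filter.atBot (nhds 0) ∧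
    Filter.Tendsto (fun i : ℤ => ∑ j ∈ sliceBox l i, |u j - w j|) Filter.atTop (nhds 0)}

noncomputable def c1L {n r : ℕ} (s : (B0 n r → ℝ) → ℝ) (l : Fin n → ℕ) (v w : Lat n → ℝ) :
    EReal :=
  sInf (J1l s l '' Gamma1L l v w)

def M1L {n r : ℕ} (s : (B0 n r → ℝ) → ℝ) (l : Fin n → ℕ) (v w : Lat n → ℝ) :
    Set (Lat n → ℝ) :=
  {u ∈ Gamma1L l v w | J1l s l u = c1L s l v w}

/-! ### Minimal and Birkhoff configurations -/

/-- `u` is a (global) minimizer for the potentials `S_j`. -/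
def Minimal {n r : ℕ} (s : (B0 n r → ℝ) → ℝ) (u : Lat n → ℝ) : Prop :=
  ∀ B : Finset (Lat n), ∀ v : Lat n → ℝ,
    (∀ i : Lat n, v i ≠ 0 → i ∈ B ∧ ∀ k : Lat n, latNorm (k - i) ≤ r → k ∈ B) →
    ∑ j ∈ B, Spot s j u ≤ ∑ j ∈ B, Spot s j (u + v)

/-- `u` is Birkhoff: all its integer translates are comparable with `u`. -/
def Birkhoff {n : ℕ} (u : Lat n → ℝ) : Prop :=
  ∀ k : Fin n, ∀ j : ℤ,
    (∀ i, u (i + j • latE (k : ℕ)) < u i) ∨ (∀ i, u (i + j • latE (k : ℕ)) = u i) ∨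
      (∀ i, u i < u (i + j • latE (k : ℕ)))

/-! ### The second-order objects (`Γ̂_2`, `J_2`, `M_2`) -/

/-- Configurations of period one in the coordinate directions `3,…,n`. -/
def tailPeriodic2 {n : ℕ} (u : Lat n → ℝ) : Prop :=
  ∀ i : Lat n, ∀ k : Fin n, 2 ≤ (k : ℕ) → u (i + latE (k : ℕ)) = u i

/-- The set `Γ̂_2(v,w)`. -/
def Gamma2hat {n : ℕ} (v w : Lat n → ℝ) : Set (Lat n → ℝ) :=
  {u | tailPeriodic2 u ∧ v ≤ u ∧ u ≤ w}

/-- The row `E_i = {j ∈ ℤ^n : j_2 = i, j_3 = ⋯ = j_n = 0}`. -/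
def Erow (n : ℕ) (i : ℤ) : Set (Lat n) :=
  {j | (∀ k : Fin n, (k : ℕ) = 1 → j k = i) ∧ ∀ k : Fin n, 2 ≤ (k : ℕ) → j k = 0}

/-- `J_{2,i}(u) = J_1(τ²_{-i} u) - c_1 = ∑_{j ∈ E_0} [S_j(τ²_{-i}u) - S_j(v)]`, where `v` is the
base configuration. -/
noncomputable def J2i {n r : ℕ} (s : (B0 n r → ℝ) → ℝ) (v : Lat n → ℝ) (i : ℤ)
    (u : Lat n → ℝ) : ℝ :=
  ∑' j : Erow n 0, (Spot s j.1 (fun x => u (x + i • latE 1)) - Spot s j.1 v)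

noncomputable def J2pq {n r : ℕ} (s : (B0 n r → ℝ) → ℝ) (v : Lat n → ℝ) (p q : ℤ)
    (u : Lat n → ℝ) : ℝ :=
  ∑ i ∈ Finset.Icc p q, J2i s v i u

/-- The renormalized functional `J_2`, as an extended real. -/
noncomputable def J2 {n r : ℕ} (s : (B0 n r → ℝ) → ℝ) (v : Lat n → ℝ) (u : Lat n → ℝ) :
    EReal :=
  Filter.liminf (fun pq : ℤ × ℤ => ((J2pq s v pq.1 pq.2 u : ℝ) : EReal))
    (Filter.atBot ×ˢ Filter.atTop)

/-- The set `Γ_2(v,w)` of configurations heteroclinic in `i_2` from `v` to `w`. -/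
def Gamma2 {n : ℕ} (v w : Lat n → ℝ) : Set (Lat n → ℝ) :=
  {u | u ∈ Gamma2hat v w ∧
    Filter.Tendsto (fun i : ℤ => ∑' j : Erow n i, |u j.1 - v j.1|) Filter.atBot (nhds 0) ∧
    Filter.Tendsto (fun i : ℤ => ∑' j : Erow n i, |u j.1 - w j.1|) Filter.atTop (nhds 0)}

noncomputable def c2 {n r : ℕ} (s : (B0 n r → ℝ) → ℝ) (v w : Lat n → ℝ) : EReal :=
  sInf (J2 s v '' Gamma2 v w)

def M2 {n r : ℕ} (s : (B0 n r → ℝ) → ℝ) (v w : Lat n → ℝ) : Set (Lat n → ℝ) :=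
  {u ∈ Gamma2 v w | J2 s v u = c2 s v w}



/-! ### Auxiliary lemmas for statement 12 -/

lemma latNorm_eq_zero' {n : ℕ} {i : Lat n} (h : latNorm i = 0) : i = 0 := by
  funext k
  have h2 : (i k).natAbs = 0 :=
    Finset.sum_eq_zero_iff.mp h k (Finset.mem_univ k)
  show i k = 0
  omega

lemma latNorm_update_add {n : ℕ} (i : Lat n) (k : Fin n) (c : ℤ) :
    latNorm (Function.update i k c) + (i k).natAbs = latNorm i + c.natAbs := by
  unfold latNorm
  rw [Finset.sum_eq_add_sum_sdiff_singleton_of_mem (Finset.mem_univ k)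
      (fun j => (Function.update i k c j).natAbs),
    Finset.sum_eq_add_sum_sdiff_singleton_of_mem (Finset.mem_univ k) (fun j => (i j).natAbs)]
  have hcong : ∑ j ∈ Finset.univ \ {k}, (Function.update i k c j).natAbs
      = ∑ j ∈ Finset.univ \ {k}, (i j).natAbs := by
    refine Finset.sum_congr rfl fun j hj => ?_
    have hjk : j ≠ k := by
      simp only [Finset.mem_sdiff, Finset.mem_singleton] at hj
      exact hj.2
    rw [Function.update_of_ne hjk]
  rw [hcong, Function.update_self]
  ring

lemma fullyPeriodic_apply_eq {n : ℕ} {u : Lat n → ℝ} (h : fullyPeriodic u) (i : Lat n) :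
    u i = u 0 := by
  generalize hm : latNorm i = m
  induction m generalizing i with
  | zero => rw [latNorm_eq_zero' hm]
  | succ m ih =>
    have hne : ∃ k, i k ≠ 0 := by
      by_contra hc
      push_neg at hc
      rw [funext hc] at hm
      simp [latNorm] at hm
    obtain ⟨k, hk⟩ := hne
    rcases lt_or_gt_of_ne hk with hneg | hpos
    · -- i k < 0 : use i' = update i k (i k + 1), i' = i + latE k
      set i' := Function.update i k (i k + 1) with hi'
      have heq : i' = i + latE (k : ℕ) := by
        funext j
        by_cases hj : j = k
        · subst hj
          simp [hi', latE, Function.update_self]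
        · have : (j : ℕ) ≠ (k : ℕ) := fun hc => hj (Fin.val_injective hc)
          simp [hi', latE, Function.update_of_ne hj, this]
      have hnorm : latNorm i' = m := by
        have h9 := latNorm_update_add i k (i k + 1)
        rw [← hi', hm] at h9
        omega
      have : u i' = u i := by rw [heq]; exact h i k
      rw [← this]
      exact ih i' hnorm
    · -- i k > 0 : use i' = update i k (i k - 1), i = i' + latE k
      set i' := Function.update i k (i k - 1) with hi'
      have heq : i = i' + latE (k : ℕ) := by
        funext j
        by_cases hj : j = k
        · subst hj
          simp [hi', latE, Function.update_self]
        · have : (j : ℕ) ≠ (k : ℕ) := fun hc => hj (Fin.val_injective hc)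
          simp [hi', latE, Function.update_of_ne hj, this]
      have hnorm : latNorm i' = m := by
        have h9 := latNorm_update_add i k (i k - 1)
        rw [← hi', hm] at h9
        omega
      have : u i = u i' := by rw [heq]; exact h i' k
      rw [this]
      exact ih i' hnorm

lemma fullyPeriodic_const {n : ℕ} (c : ℝ) : fullyPeriodic (fun _ : Lat n => c) :=
  fun _ _ => rfl

/-- The restriction of `s` to constant configurations. -/
noncomputable def gfun {n r : ℕ} (s : (B0 n r → ℝ) → ℝ) (c : ℝ) : ℝ := s (fun _ => c)

lemma J0_eq_gfun {n r : ℕ} (s : (B0 n r → ℝ) → ℝ) {u : Lat n → ℝ} (h : fullyPeriodic u) :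
    J0 s u = gfun s (u 0) := by
  unfold J0 Spot gfun
  congr 1
  funext k
  rw [zero_add]
  exact fullyPeriodic_apply_eq h k.1

lemma gfun_continuous {n r : ℕ} {s : (B0 n r → ℝ) → ℝ} (hs : IsPotential n r s) :
    Continuous (gfun s) :=
  hs.smooth.continuous.comp (continuous_pi fun _ => continuous_id)

lemma gfun_periodic {n r : ℕ} {s : (B0 n r → ℝ) → ℝ} (hs : IsPotential n r s) :
    Function.Periodic (gfun s) 1 :=
  fun c => hs.periodic (fun _ => c)

lemma gfun_int {n r : ℕ} {s : (B0 n r → ℝ) → ℝ} (hs : IsPotential n r s) (k : ℤ) (x : ℝ) :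
    gfun s (x + k) = gfun s x := by
  have h := ((gfun_periodic hs).int_mul k) x
  simpa using h

lemma c0_bddBelow {n r : ℕ} {s : (B0 n r → ℝ) → ℝ} (hs : IsPotential n r s) :
    BddBelow (J0 s '' {u | fullyPeriodic u}) := by
  obtain ⟨M, hM⟩ := hs.bddBelow
  exact ⟨M, by rintro x ⟨u, hu, rfl⟩; exact hM _⟩

lemma c0_le_gfun {n r : ℕ} {s : (B0 n r → ℝ) → ℝ} (hs : IsPotential n r s) (c : ℝ) :
    c0 s ≤ gfun s c :=
  csInf_le (c0_bddBelow hs) ⟨fun _ => c, fullyPeriodic_const c, rfl⟩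

lemma gfun_le_c0 {n r : ℕ} {s : (B0 n r → ℝ) → ℝ} (_hs : IsPotential n r s) {m : ℝ}
    (h : ∀ c, m ≤ gfun s c) : m ≤ c0 s := by
  refine le_csInf ⟨gfun s 0, fun _ => (0 : ℝ), fullyPeriodic_const 0, rfl⟩ ?_
  rintro x ⟨u, hu, rfl⟩
  rw [J0_eq_gfun s hu]
  exact h (u 0)

lemma exists_global_min {n r : ℕ} {s : (B0 n r → ℝ) → ℝ} (hs : IsPotential n r s) :
    ∃ c : ℝ, gfun s c = c0 s ∧ ∀ x, gfun s c ≤ gfun s x := by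
  obtain ⟨c, _hc, hmin⟩ := isCompact_Icc.exists_isMinOn
    (Set.nonempty_Icc.mpr (zero_le_one (α := ℝ))) ((gfun_continuous hs).continuousOn)
  have hall : ∀ x, gfun s c ≤ gfun s x := by
    intro x
    have h1 : gfun s x = gfun s (Int.fract x) := by
      have h2 := gfun_int hs ⌊x⌋ (Int.fract x)
      rw [← h2]
      congr 1
      rw [Int.fract]
      ring
    rw [h1]
    exact isMinOn_iff.mp hmin (Int.fract x)
      ⟨Int.fract_nonneg x, (Int.fract_lt_one x).le⟩
  exact ⟨c, le_antisymm (gfun_le_c0 hs hall) (c0_le_gfun hs c), hall⟩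

/-- stability of the gap condition (*₀) under `L^∞`-small perturbations. -/
theorem statement_12 (n r : ℕ) (s : (B0 (n + 2) (r + 1) → ℝ) → ℝ)
    (hs : IsPotential (n + 2) (r + 1) s) (v0 w0 : Lat (n + 2) → ℝ)
    (hadj : Adjacent (M0 s) v0 w0) :
    (∀ δ : ℝ, 0 < δ → δ < (w0 0 - v0 0) / 2 →
      ∃ ε1 : ℝ, 0 < ε1 ∧ ∀ s' : (B0 (n + 2) (r + 1) → ℝ) → ℝ,
        IsPotential (n + 2) (r + 1) s' → (∀ x, |s x - s' x| ≤ ε1) →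
        ∀ v ∈ M0 s', v 0 ∉ Set.Ioo (v0 0 + δ) (w0 0 - δ)) ∧
    ∃ ε : ℝ, 0 < ε ∧ ∀ s' : (B0 (n + 2) (r + 1) → ℝ) → ℝ,
      IsPotential (n + 2) (r + 1) s' → (∀ x, |s x - s' x| ≤ ε) →
      ∃ a b, Adjacent (M0 s') a b := by
  obtain ⟨hv0, hw0, hlt, hgap⟩ := hadj
  have hαβ : v0 0 < w0 0 := hlt 0
  have hgα : gfun s (v0 0) = c0 s := by rw [← J0_eq_gfun s hv0.1]; exact hv0.2
  have key : ∀ δ : ℝ, 0 < δ → δ < (w0 0 - v0 0) / 2 →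
      ∃ ε1 : ℝ, 0 < ε1 ∧ ∀ s' : (B0 (n + 2) (r + 1) → ℝ) → ℝ,
        IsPotential (n + 2) (r + 1) s' → (∀ x, |s x - s' x| ≤ ε1) →
        ∀ v ∈ M0 s', v 0 ∉ Set.Ioo (v0 0 + δ) (w0 0 - δ) := by
    intro δ hδ hδ2
    have hne : (Set.Icc (v0 0 + δ) (w0 0 - δ)).Nonempty :=
      Set.nonempty_Icc.mpr (by linarith)
    obtain ⟨c1, hc1, hmin⟩ := isCompact_Icc.exists_isMinOn hne
      ((gfun_continuous hs).continuousOn)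
    have hm1 : c0 s < gfun s c1 := by
      rcases lt_or_ge (c0 s) (gfun s c1) with h | h
      · exact h
      · exfalso
        have he : gfun s c1 = c0 s := le_antisymm h (c0_le_gfun hs c1)
        have hmem : (fun _ : Lat (n + 2) => c1) ∈ M0 s := ⟨fullyPeriodic_const c1, he⟩
        have hle1 : v0 ≤ fun _ => c1 := fun i => by
          rw [fullyPeriodic_apply_eq hv0.1 i]; linarith [hc1.1]
        have hle2 : (fun _ : Lat (n + 2) => c1) ≤ w0 := fun i => by
          rw [fullyPeriodic_apply_eq hw0.1 i]; linarith [hc1.2]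
        rcases hgap _ hmem hle1 hle2 with h' | h'
        · have := congrFun h' 0
          have := hc1.1
          linarith [this]
        · have := congrFun h' 0
          have := hc1.2
          linarith [this]
    refine ⟨(gfun s c1 - c0 s) / 3, by linarith, ?_⟩
    intro s' hs' hclose v hv hvm
    have hK : gfun s' (v 0) = c0 s' := by rw [← J0_eq_gfun s' hv.1]; exact hv.2
    have h1 : c0 s' ≤ gfun s' (v0 0) := c0_le_gfun hs' (v0 0)
    have h2 : gfun s' (v0 0) ≤ gfun s (v0 0) + (gfun s c1 - c0 s) / 3 := by
      have h := abs_le.mp (hclose (fun _ => v0 0))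
      unfold gfun at h ⊢
      linarith [h.1]
    have h3 : gfun s (v 0) - (gfun s c1 - c0 s) / 3 ≤ gfun s' (v 0) := by
      have h := abs_le.mp (hclose (fun _ => v 0))
      unfold gfun at h ⊢
      linarith [h.2]
    have h4 : gfun s c1 ≤ gfun s (v 0) :=
      isMinOn_iff.mp hmin (v 0) ⟨hvm.1.le, hvm.2.le⟩
    linarith
  refine ⟨key, ?_⟩
  obtain ⟨ε1, hε1, hstab⟩ := key ((w0 0 - v0 0) / 4) (by linarith) (by linarith)
  refine ⟨ε1, hε1, fun s' hs' hclose => ?_⟩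
  obtain ⟨cstar, hcs, _⟩ := exists_global_min hs'
  set m : ℝ := (v0 0 + w0 0) / 2 with hm
  have hmK : gfun s' m ≠ c0 s' := by
    intro h
    exact hstab s' hs' hclose (fun _ => m) ⟨fullyPeriodic_const m, h⟩
      ⟨by simp only [hm]; linarith, by simp only [hm]; linarith⟩
  have hKclosed : IsClosed {c : ℝ | gfun s' c = c0 s'} :=
    isClosed_eq (gfun_continuous hs') continuous_const
  -- set A below m
  have hAne : ({c : ℝ | gfun s' c = c0 s'} ∩ Set.Iic m).Nonempty := by
    refine ⟨cstar - ⌈cstar - m⌉, ?_, ?_⟩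
    · show gfun s' (cstar - ⌈cstar - m⌉) = c0 s'
      have := gfun_int hs' (-⌈cstar - m⌉) cstar
      push_cast at this
      rw [show cstar - (⌈cstar - m⌉ : ℝ) = cstar + -(⌈cstar - m⌉ : ℝ) by ring]
      rw [this]
      exact hcs
    · have := Int.le_ceil (cstar - m)
      simp only [Set.mem_Iic]
      linarith
  have hAbdd : BddAbove ({c : ℝ | gfun s' c = c0 s'} ∩ Set.Iic m) :=
    ⟨m, fun x hx => hx.2⟩
  have hBne : ({c : ℝ | gfun s' c = c0 s'} ∩ Set.Ici m).Nonempty := by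
    refine ⟨cstar + ⌈m - cstar⌉, ?_, ?_⟩
    · show gfun s' (cstar + ⌈m - cstar⌉) = c0 s'
      rw [gfun_int hs' ⌈m - cstar⌉ cstar]
      exact hcs
    · have := Int.le_ceil (m - cstar)
      simp only [Set.mem_Ici]
      linarith
  have hBbdd : BddBelow ({c : ℝ | gfun s' c = c0 s'} ∩ Set.Ici m) :=
    ⟨m, fun x hx => hx.2⟩
  set a : ℝ := sSup ({c : ℝ | gfun s' c = c0 s'} ∩ Set.Iic m) with hadef
  set b : ℝ := sInf ({c : ℝ | gfun s' c = c0 s'} ∩ Set.Ici m) with hbdef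
  have ha : a ∈ {c : ℝ | gfun s' c = c0 s'} ∩ Set.Iic m :=
    (hKclosed.inter isClosed_Iic).csSup_mem hAne hAbdd
  have hb : b ∈ {c : ℝ | gfun s' c = c0 s'} ∩ Set.Ici m :=
    (hKclosed.inter isClosed_Ici).csInf_mem hBne hBbdd
  have ham : a < m := lt_of_le_of_ne ha.2 (fun h => hmK (h ▸ ha.1))
  have hbm : m < b := lt_of_le_of_ne hb.2 (fun h => hmK (by rw [h]; exact hb.1))
  refine ⟨fun _ => a, fun _ => b,
    ⟨fullyPeriodic_const a, ha.1⟩, ⟨fullyPeriodic_const b, hb.1⟩,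
    fun i => by linarith, ?_⟩
  intro u hu hle1 hle2
  have hK : gfun s' (u 0) = c0 s' := by rw [← J0_eq_gfun s' hu.1]; exact hu.2
  rcases le_total (u 0) m with hcm | hcm
  · left
    have h5 : u 0 ≤ a := le_csSup hAbdd ⟨hK, hcm⟩
    have h6 : a ≤ u 0 := hle1 0
    funext i
    rw [fullyPeriodic_apply_eq hu.1 i]
    linarith
  · right
    have h5 : b ≤ u 0 := csInf_le hBbdd ⟨hK, hcm⟩
    have h6 : u 0 ≤ b := hle2 0
    funext i
    rw [fullyPeriodic_apply_eq hu.1 i]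
    linarith

end FK
end

section
/- Assume s is a potential satisfying (S1)–(S3) and let v ∈ M_0(s). Then there exists a C² function s̄ : ℝ^{B_0^r} → ℝ satisfying (S1)–(S3) such that for every ε > 0, M_0(s + ε s̄) = {v + j : j ∈ ℤ}; in particular (*_0) holds for the potential s + ε s̄ for every ε > 0. -/
open scoped BigOperators

namespace FK

/-! ### Auxiliary material for statement 13 -/

section Statement13Aux

variable {n r : ℕ}

lemma fp_translate {u : Lat n → ℝ} (h : fullyPeriodic u) (i : Lat n) (k : Fin n) (m : ℤ) :
    u (i + m • latE (k : ℕ)) = u i := by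
  induction m using Int.induction_on with
  | zero => simp
  | succ m ih =>
      have e : i + ((m : ℤ) + 1) • latE (k : ℕ)
          = (i + (m : ℤ) • latE (k : ℕ)) + latE (k : ℕ) := by
        rw [add_smul, one_smul]; abel
      rw [e, h _ k, ih]
  | pred m ih =>
      have h2 := h (i + (-(m : ℤ) - 1) • latE (k : ℕ)) k
      have e : (i + (-(m : ℤ) - 1) • latE (k : ℕ)) + latE (k : ℕ)
          = i + (-(m : ℤ)) • latE (k : ℕ) := by
        rw [sub_smul, one_smul]; abel
      rw [e] at h2
      exact h2.symm.trans ih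

lemma fp_const {u : Lat n → ℝ} (h : fullyPeriodic u) (i : Lat n) : u i = u 0 := by
  classical
  have hj : (∑ k : Fin n, i k • latE (k : ℕ)) = i := by
    funext m
    rw [Finset.sum_apply, Finset.sum_eq_single m]
    · simp [latE]
    · intro b _ hb
      have hne : ¬ ((m : ℕ) = (b : ℕ)) := fun hh => hb (Fin.ext hh.symm)
      simp [latE, hne]
    · intro hm; exact absurd (Finset.mem_univ m) hm
  have key : ∀ F : Finset (Fin n), ∀ j : Lat n,
      u (j + ∑ k ∈ F, i k • latE (k : ℕ)) = u j := by
    intro F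
    induction F using Finset.induction_on with
    | empty => intro j; simp
    | insert a F' hk ih =>
        intro j
        rw [Finset.sum_insert hk]
        have e : j + (i a • latE (a : ℕ) + ∑ k ∈ F', i k • latE (k : ℕ))
            = (j + ∑ k ∈ F', i k • latE (k : ℕ)) + i a • latE (a : ℕ) := by abel
        rw [e, fp_translate h _ a (i a), ih j]
  have := key Finset.univ 0
  rw [hj, zero_add] at this
  exact this

lemma fp_constFun (t : ℝ) : fullyPeriodic (fun _ : Lat n => t) := fun _ _ => rfl

lemma s_int_periodic {s : (B0 n r → ℝ) → ℝ}
    (hper : ∀ x : B0 n r → ℝ, s (fun k => x k + 1) = s x) (x : B0 n r → ℝ) (j : ℤ) :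
    s (fun k => x k + (j : ℝ)) = s x := by
  induction j using Int.induction_on with
  | zero => simp
  | succ m ih =>
      have h1 := hper (fun k => x k + ((m : ℤ) : ℝ))
      have e : (fun k => (fun k => x k + ((m : ℤ) : ℝ)) k + 1)
          = (fun k => x k + (((m : ℤ) + 1 : ℤ) : ℝ)) := by
        funext k; push_cast; ring
      rw [e] at h1
      rw [h1, ih]
  | pred m ih =>
      have h1 := hper (fun k => x k + ((-(m : ℤ) - 1 : ℤ) : ℝ))
      have e : (fun k => (fun k => x k + ((-(m : ℤ) - 1 : ℤ) : ℝ)) k + 1)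
          = (fun k => x k + ((-(m : ℤ) : ℤ) : ℝ)) := by
        funext k; push_cast; ring
      rw [e] at h1
      exact h1.symm.trans ih

/-- The periodic bump `1 - cos(2π(x(0) - c))`. -/
noncomputable def pertG (n r : ℕ) (c : ℝ) (x : B0 n r → ℝ) : ℝ :=
  1 - Real.cos (2 * Real.pi * (x (B0.zero n r) - c))

lemma pertG_contDiff (c : ℝ) : ContDiff ℝ 2 (pertG n r c) := by
  unfold pertG
  exact contDiff_const.sub (Real.contDiff_cos.comp
    (contDiff_const.mul ((contDiff_apply (𝕜 := ℝ) (E := ℝ) (B0.zero n r)).sub contDiff_const)))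

lemma pertG_nonneg (c : ℝ) (x : B0 n r → ℝ) : 0 ≤ pertG n r c x := by
  unfold pertG
  have := Real.cos_le_one (2 * Real.pi * (x (B0.zero n r) - c))
  linarith

lemma pertG_periodic (c : ℝ) (x : B0 n r → ℝ) :
    pertG n r c (fun k => x k + 1) = pertG n r c x := by
  unfold pertG
  have e : 2 * Real.pi * ((x (B0.zero n r) + 1) - c)
      = 2 * Real.pi * (x (B0.zero n r) - c) + 2 * Real.pi := by ring
  rw [e, Real.cos_add_two_pi]

lemma pertG_int (c : ℝ) (j : ℤ) : pertG n r c (fun _ => c + (j : ℝ)) = 0 := by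
  unfold pertG
  have e : 2 * Real.pi * ((c + (j : ℝ)) - c) = (j : ℝ) * (2 * Real.pi) := by ring
  rw [e, Real.cos_int_mul_two_pi]
  ring

lemma pertG_eq_zero {c t : ℝ} (h : pertG n r c (fun _ => t) = 0) : ∃ j : ℤ, t = c + (j : ℝ) := by
  unfold pertG at h
  have hcos : Real.cos (2 * Real.pi * (t - c)) = 1 := by linarith
  obtain ⟨m, hm⟩ := (Real.cos_eq_one_iff _).1 hcos
  refine ⟨m, ?_⟩
  have hpi : (2 * Real.pi) ≠ 0 := by positivity
  have h2 : 2 * Real.pi * (m : ℝ) = 2 * Real.pi * (t - c) := by linarith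
  have h3 := mul_left_cancel₀ hpi h2
  linarith

end Statement13Aux

section Statement13Deriv

variable {n r : ℕ}

lemma curve_diffAt {s : (B0 n r → ℝ) → ℝ} (hsd : Differentiable ℝ s) (x : B0 n r → ℝ)
    (k : B0 n r) (t : ℝ) :
    DifferentiableAt ℝ (fun t' => s (Function.update x k t')) t :=
  DifferentiableAt.comp _ (hsd _) (hasDerivAt_update x k t).differentiableAt

lemma pder_add_split {s g : (B0 n r → ℝ) → ℝ} (hsd : Differentiable ℝ s)
    (hgd : Differentiable ℝ g) (k : B0 n r) (x : B0 n r → ℝ) :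
    pder (fun y => s y + g y) k x = pder s k x + pder g k x := by
  unfold pder
  exact deriv_add (curve_diffAt hsd x k (x k)) (curve_diffAt hgd x k (x k))

lemma pder_eq_fderiv {s : (B0 n r → ℝ) → ℝ} (hsd : Differentiable ℝ s) (k : B0 n r)
    (x : B0 n r → ℝ) :
    pder s k x = fderiv ℝ s x (Pi.single k 1) := by
  have h2 : HasFDerivAt s (fderiv ℝ s x) (Function.update x k (x k)) := by
    rw [Function.update_eq_self]; exact (hsd x).hasFDerivAt
  have h3 := h2.comp_hasDerivAt (x k) (hasDerivAt_update x k (x k))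
  exact h3.deriv

lemma fderiv_apply_contDiff {s : (B0 n r → ℝ) → ℝ} (hs2 : ContDiff ℝ 2 s) (k : B0 n r) :
    ContDiff ℝ 1 (fun x => fderiv ℝ s x (Pi.single k 1)) :=
  (hs2.fderiv_right (m := 1) (by norm_num)).clm_apply contDiff_const

/-- The derivative of the 1-dimensional bump. -/
noncomputable def phiG (c : ℝ) (a : ℝ) : ℝ :=
  deriv (fun t => 1 - Real.cos (2 * Real.pi * (t - c))) a

lemma pder_pertG_ne {c : ℝ} {j : B0 n r} (hj : j ≠ B0.zero n r) (x : B0 n r → ℝ) :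
    pder (pertG n r c) j x = 0 := by
  unfold pder
  have e : (fun t => pertG n r c (Function.update x j t)) = fun _ => pertG n r c x := by
    funext t; unfold pertG
    rw [Function.update_of_ne (Ne.symm hj)]
  rw [e, deriv_const]

lemma pder_pertG_zero (c : ℝ) (x : B0 n r → ℝ) :
    pder (pertG n r c) (B0.zero n r) x = phiG c (x (B0.zero n r)) := by
  unfold pder phiG
  congr 1
  funext t
  unfold pertG
  rw [Function.update_self]

lemma cross_split {s : (B0 n r → ℝ) → ℝ} (hs2 : ContDiff ℝ 2 s) (c : ℝ)
    (j k : B0 n r) (hkj : k ≠ j) (x : B0 n r → ℝ) :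
    pder (pder (fun y => s y + pertG n r c y) j) k x = pder (pder s j) k x := by
  have hsd : Differentiable ℝ s := hs2.differentiable (by norm_num)
  have hgd : Differentiable ℝ (pertG n r c) := (pertG_contDiff c).differentiable (by norm_num)
  have hsplit : ∀ y, pder (fun y => s y + pertG n r c y) j y
      = pder s j y + pder (pertG n r c) j y := fun y => pder_add_split hsd hgd j y
  by_cases hjz : j = B0.zero n r
  · subst hjz
    have hkz : k ≠ B0.zero n r := hkj
    have e : (fun t => pder (fun y => s y + pertG n r c y) (B0.zero n r)
          (Function.update x k t))
        = fun t => pder s (B0.zero n r) (Function.update x k t)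
            + phiG c (x (B0.zero n r)) := by
      funext t
      rw [hsplit, pder_pertG_zero, Function.update_of_ne (Ne.symm hkz)]
    show deriv _ (x k) = _
    rw [e, deriv_add_const]
    rfl
  · have e : (fun t => pder (fun y => s y + pertG n r c y) j (Function.update x k t))
        = fun t => pder s j (Function.update x k t) := by
      funext t
      rw [hsplit, pder_pertG_ne hjz, add_zero]
    show deriv _ (x k) = _
    rw [e]
    rfl

end Statement13Deriv

/-- genericity of (*₀): a perturbation `s + ε s̄` with
`M_0(s + ε s̄) = {v + j : j ∈ ℤ}`. -/
theorem statement_13 (n r : ℕ) (s : (B0 (n + 2) (r + 1) → ℝ) → ℝ)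
    (hs : IsPotential (n + 2) (r + 1) s) (v : Lat (n + 2) → ℝ) (hv : v ∈ M0 s) :
    ∃ sb : (B0 (n + 2) (r + 1) → ℝ) → ℝ, IsPotential (n + 2) (r + 1) sb ∧
      ∀ ε : ℝ, 0 < ε →
        M0 (fun x => s x + ε * sb x) = {u | ∃ j : ℤ, u = fun i => v i + (j : ℝ)} ∧
        ∃ a b, Adjacent (M0 (fun x => s x + ε * sb x)) a b := by
  classical
  obtain ⟨hvp, hvJ⟩ := hv
  set c : ℝ := v 0 with hc
  refine ⟨fun x => s x + pertG (n + 2) (r + 1) c x, ?_, ?_⟩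
  · constructor
    · exact hs.smooth.add (pertG_contDiff c)
    · intro x
      show s (fun k => x k + 1) + pertG _ _ c (fun k => x k + 1) = _
      rw [hs.periodic, pertG_periodic]
    · obtain ⟨M, hM⟩ := hs.bddBelow
      exact ⟨M, fun x => le_trans (hM x) (le_add_of_nonneg_right (pertG_nonneg c x))⟩
    · intro k j h C
      obtain ⟨R, hR⟩ := hs.coercive k j h C
      exact ⟨R, fun x hx => le_trans (hR x hx) (le_add_of_nonneg_right (pertG_nonneg c x))⟩
    · intro k j hkj x
      rw [cross_split hs.smooth c j k hkj x]
      exact hs.cross_nonpos k j hkj x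
    · intro j hj x
      have hzj : B0.zero (n + 2) (r + 1) ≠ j := by
        intro h
        rw [← h] at hj
        simp [B0.zero, latNorm] at hj
      rw [cross_split hs.smooth c j _ hzj x]
      exact hs.cross_neg j hj x
  · -- the main statement about `M0`
    have hvc : ∀ i, v i = c := fun i => fp_const hvp i
    have hJ0 : ∀ (f : (B0 (n + 2) (r + 1) → ℝ) → ℝ) (u : Lat (n + 2) → ℝ), fullyPeriodic u →
        J0 f u = f (fun _ => u 0) := by
      intro f u hu
      unfold J0 Spot
      congr 1
      funext k
      rw [zero_add]
      exact fp_const hu _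
    have hbdd : BddBelow (J0 s '' {u | fullyPeriodic u}) := by
      obtain ⟨M, hM⟩ := hs.bddBelow
      refine ⟨M, ?_⟩
      rintro y ⟨u, hu, rfl⟩
      exact hM _
    have hc0 : c0 s = s (fun _ => c) := by
      rw [← hvJ, hJ0 s v hvp]
    set m : ℝ := s (fun _ => c) with hm
    have hmin : ∀ t : ℝ, m ≤ s (fun _ => t) := by
      intro t
      rw [← hc0]
      exact csInf_le hbdd ⟨fun _ => t, fp_constFun t, hJ0 s _ (fp_constFun t)⟩
    have hint : ∀ j : ℤ, s (fun _ => c + (j : ℝ)) = m := by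
      intro j
      exact s_int_periodic hs.periodic (fun _ => c) j
    have hg0 : pertG (n + 2) (r + 1) c (fun _ => c) = 0 := by
      have := pertG_int (n := n + 2) (r := r + 1) c 0
      simpa using this
    intro ε hε
    set s' : (B0 (n + 2) (r + 1) → ℝ) → ℝ :=
      fun x => s x + ε * (s x + pertG (n + 2) (r + 1) c x) with hs'
    have hlow : ∀ u : Lat (n + 2) → ℝ, fullyPeriodic u → m + ε * m ≤ J0 s' u := by
      intro u hu
      rw [hJ0 s' u hu]
      show m + ε * m ≤ s (fun _ => u 0)
        + ε * (s (fun _ => u 0) + pertG (n + 2) (r + 1) c (fun _ => u 0))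
      have h1 := hmin (u 0)
      have h2 := pertG_nonneg (n := n + 2) (r := r + 1) c (fun _ => u 0)
      nlinarith
    have hfull : ∀ j : ℤ, fullyPeriodic (fun i => v i + (j : ℝ)) := by
      intro j i k
      show v (i + latE (k : ℕ)) + _ = v i + _
      rw [hvp i k]
    have hval : ∀ j : ℤ, J0 s' (fun i => v i + (j : ℝ)) = m + ε * m := by
      intro j
      rw [hJ0 s' _ (hfull j)]
      show s (fun _ => v 0 + (j : ℝ))
          + ε * (s (fun _ => v 0 + (j : ℝ)) + pertG (n + 2) (r + 1) c (fun _ => v 0 + (j : ℝ)))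
        = m + ε * m
      have e : (fun _ : B0 (n + 2) (r + 1) => v 0 + (j : ℝ)) = fun _ => c + (j : ℝ) := rfl
      rw [e, hint j, pertG_int]
      ring
    have hvmem : J0 s' v = m + ε * m := by
      have := hval 0
      have e : (fun i => v i + ((0 : ℤ) : ℝ)) = v := by funext i; simp
      rwa [e] at this
    have hbdd' : BddBelow (J0 s' '' {u | fullyPeriodic u}) := by
      refine ⟨m + ε * m, ?_⟩
      rintro y ⟨u, hu, rfl⟩
      exact hlow u hu
    have hc0' : c0 s' = m + ε * m := by
      apply le_antisymm
      · rw [← hvmem]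
        exact csInf_le hbdd' ⟨v, hvp, rfl⟩
      · refine le_csInf ⟨J0 s' v, v, hvp, rfl⟩ ?_
        rintro y ⟨u, hu, rfl⟩
        exact hlow u hu
    have hM0 : M0 s' = {u | ∃ j : ℤ, u = fun i => v i + (j : ℝ)} := by
      ext u
      constructor
      · rintro ⟨hu, hJu⟩
        rw [hc0', hJ0 s' u hu] at hJu
        have hJu' : s (fun _ => u 0)
            + ε * (s (fun _ => u 0) + pertG (n + 2) (r + 1) c (fun _ => u 0)) = m + ε * m := hJu
        have h1 := hmin (u 0)
        have h2 := pertG_nonneg (n := n + 2) (r := r + 1) c (fun _ => u 0)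
        have hgz : pertG (n + 2) (r + 1) c (fun _ => u 0) = 0 := by nlinarith
        obtain ⟨jj, hjj⟩ := pertG_eq_zero hgz
        refine ⟨jj, ?_⟩
        funext i
        calc u i = u 0 := fp_const hu i
          _ = c + (jj : ℝ) := hjj
          _ = v i + (jj : ℝ) := by rw [hvc i]
      · rintro ⟨j, rfl⟩
        exact ⟨hfull j, by rw [hval j, hc0']⟩
    refine ⟨hM0, v, (fun i => v i + 1), ?_⟩
    rw [hM0]
    refine ⟨⟨0, by funext i; simp⟩, ⟨1, by funext i; norm_num⟩, fun i => lt_add_one (v i), ?_⟩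
    rintro u ⟨j, rfl⟩ hle1 hle2
    have h1 : (0 : ℝ) ≤ (j : ℝ) := by
      have := hle1 0
      simpa using this
    have h2 : (j : ℝ) ≤ 1 := by
      have := hle2 0
      simpa using this
    have hj0 : 0 ≤ j := by exact_mod_cast h1
    have hj1 : j ≤ 1 := by exact_mod_cast h2
    interval_cases j
    · left; funext i; simp
    · right; funext i; norm_num

end FK
end
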